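/- Suppose ⊢ □(ψ ↔ (□ψ → φ)) for some formula ψ (a Löb sentence for φ) and ⊢ □(□φ → φ). Then ⊢ □φ. -/

import Mathlib

/-- Formulas of the monomodal language: propositional letters, ⊥, →, and □. -/
inductive Formula : Type
  | atom : Nat → Formula
  | falsum : Formula
  | imp : Formula → Formula → Formula
  | box : Formula → Formula

namespace Formula

/-- ¬φ := φ → ⊥ -/
def neg (φ : Formula) : Formula := imp φ falsum
/-- φ ∧ ψ := ¬(φ → ¬ψ) -/
def conj (φ ψ : Formula) : Formula := neg (imp φ (neg ψ))
/-- φ ∨ ψ := ¬φ → ψ -/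
def disj (φ ψ : Formula) : Formula := imp (neg φ) ψ
/-- φ ↔ ψ := (φ → ψ) ∧ (ψ → φ) -/
def biimp (φ ψ : Formula) : Formula := conj (imp φ ψ) (imp ψ φ)
/-- ◇φ := ¬□¬φ -/
def dia (φ : Formula) : Formula := neg (box (neg φ))

/-- φ is a propositional tautology: it is true under every assignment of
truth values to formulas that respects → and ⊥ (so atoms and boxed
formulas are treated as opaque propositional units). -/
def Taut (φ : Formula) : Prop :=
  ∀ v : Formula → Prop,
    (∀ ψ χ, v (imp ψ χ) ↔ (v ψ → v χ)) → ¬ v falsum → v φ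

end Formula

open Formula

/-- Derivability in the modal logic K4: all propositional tautologies,
scheme K, scheme 4, modus ponens, and necessitation. -/
inductive K4 : Formula → Prop
  | taut {φ} : Taut φ → K4 φ
  | axK (φ ψ) : K4 (imp (box (imp φ ψ)) (imp (box φ) (box ψ)))
  | ax4 (φ) : K4 (imp (box φ) (box (box φ)))
  | mp {φ ψ} : K4 (imp φ ψ) → K4 φ → K4 ψ
  | nec {φ} : K4 φ → K4 (box φ)

/-!
Write `χ := □ψ → φ`. Under the box, `ψ → χ` gives `□ψ → □χ` (4 and K), and `□χ` together with
`□□ψ` gives `□φ`; hence `□(□ψ → □φ)`, and with `□(□φ → φ)` we get `□χ`. The Löb sentence turns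
`□χ` into `□ψ`, and then `□□ψ` and `□(□ψ → φ)` yield `□φ`.
-/

namespace Formula

lemma taut_imp_trans (a b c : Formula) : Taut (imp (imp a b) (imp (imp b c) (imp a c))) := by
  intro v hv _
  simp only [hv]
  tauto

lemma taut_imp_distrib (a b c : Formula) :
    Taut (imp (imp a (imp b c)) (imp (imp a b) (imp a c))) := by
  intro v hv _
  simp only [hv]
  tauto

lemma taut_biimp_mp (a b : Formula) : Taut (imp (biimp a b) (imp a b)) := by
  intro v hv _
  simp only [biimp, conj, neg, hv]
  tauto

lemma taut_biimp_mpr (a b : Formula) : Taut (imp (biimp a b) (imp b a)) := by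
  intro v hv _
  simp only [biimp, conj, neg, hv]
  tauto

end Formula

namespace K4

variable {a b c : Formula}

lemma box_mp (hab : K4 (box (imp a b))) (ha : K4 (box a)) : K4 (box b) :=
  mp (mp (axK a b) hab) ha

lemma box_of_taut_imp (h : Taut (imp a b)) (ha : K4 (box a)) : K4 (box b) :=
  box_mp (nec (taut h)) ha

lemma box_of_taut_imp₂ (h : Taut (imp a (imp b c))) (ha : K4 (box a)) (hb : K4 (box b)) :
    K4 (box c) :=
  box_mp (box_of_taut_imp h ha) hb

lemma box_imp_trans (hab : K4 (box (imp a b))) (hbc : K4 (box (imp b c))) :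
    K4 (box (imp a c)) :=
  box_of_taut_imp₂ (taut_imp_trans a b c) hab hbc

lemma box_imp_distrib (habc : K4 (box (imp a (imp b c)))) (hab : K4 (box (imp a b))) :
    K4 (box (imp a c)) :=
  box_of_taut_imp₂ (taut_imp_distrib a b c) habc hab

lemma box_biimp_mp (h : K4 (box (biimp a b))) : K4 (box (imp a b)) :=
  box_of_taut_imp (taut_biimp_mp a b) h

lemma box_biimp_mpr (h : K4 (box (biimp a b))) : K4 (box (imp b a)) :=
  box_of_taut_imp (taut_biimp_mpr a b) h

lemma box_imp_box_of_box_imp (hab : K4 (box (imp a b))) : K4 (box (imp (box a) (box b))) :=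
  box_mp (nec (axK a b)) (mp (ax4 _) hab)

end K4

/-- If ⊢ □(ψ ↔ (□ψ → φ)) (a Löb sentence for φ) and
⊢ □(□φ → φ), then ⊢ □φ. -/
theorem lob_from_lob_sentence (φ ψ : Formula)
    (hLob : K4 (box (biimp ψ (imp (box ψ) φ))))
    (hAnte : K4 (box (imp (box φ) φ))) :
    K4 (box φ) := by
  have hBoxψ_boxχ : K4 (box (imp (box ψ) (box (imp (box ψ) φ)))) :=
    K4.box_imp_box_of_box_imp (K4.box_biimp_mp hLob)
  have hBoxψ_boxφ : K4 (box (imp (box ψ) (box φ))) :=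
    K4.box_imp_distrib (K4.box_imp_trans hBoxψ_boxχ (K4.nec (K4.axK _ _))) (K4.nec (K4.ax4 ψ))
  have hχ : K4 (box (imp (box ψ) φ)) := K4.box_imp_trans hBoxψ_boxφ hAnte
  have hψ : K4 (box ψ) := K4.box_mp (K4.box_biimp_mpr hLob) hχ
  exact K4.box_mp hχ (K4.mp (K4.ax4 ψ) hψ)
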